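/- arXiv:0710.5344 — 2 statements merged into one kernel-verified Lean document; each statement's English description precedes it below -/
import Mathlib

section
/- Let N be a prime, κ > 0, and let 𝔞: ℤ_N → ℝ_{≥0} satisfy Σ_{x∈ℤ_N} 𝔞(x) ≤ 1 + κ. Let δ = sup_{r ≠ 0} |𝔞̃(r)|. Let η, ε ∈ (0,1), put ℛ = {r ∈ ℤ_N : |𝔞̃(r)| ≥ η} and ℬ = {x ∈ ℤ_N : ‖xr/N‖ ≤ ε for all r ∈ ℛ}, and set 𝔟 = 1_ℬ/|ℬ| and 𝔞' = 𝔞 * 𝔟 * 𝔟. If ε^{|ℛ|} ≥ δ/κ, then |𝔞'(x)| ≤ (1 + 2κ)/N for every x ∈ ℤ_N. -/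
open Finset

/-- `e(t) = exp(2πit)`. -/
noncomputable def eC (t : ℝ) : ℂ := Complex.exp (2 * Real.pi * Complex.I * t)

/-- The (unnormalized) Fourier transform `f̃(r) = Σ_{x=1}^{N} f(x) e(−xr/N)`
of a function `f : ℤ_N → ℝ`. -/
noncomputable def dft (N : ℕ) (f : ZMod N → ℝ) (r : ZMod N) : ℂ :=
  ∑ x ∈ Finset.Icc 1 N, (f ((x : ℕ) : ZMod N) : ℂ) *
    eC (-(((x : ℕ) : ℝ) * ((r.val : ℕ) : ℝ)) / N)

/-- `‖t‖`: the distance from the real number `t` to the nearest integer. -/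
noncomputable def nint (t : ℝ) : ℝ := |t - round t|

/-!
By Fourier inversion and the convolution theorem,
`N |𝔞'(x)| ≤ ∑_r |𝔞̃(r)| |𝔟̃(r)|²`. The term `r = 0` is `∑ 𝔞 ≤ 1 + κ`, and by Parseval the
remaining terms add up to at most `δ ∑_r |𝔟̃(r)|² = δ N / |ℬ|`. The Bohr-set bound
`|ℬ| ≥ ε^{|ℛ|} N` together with `δ ≤ κ ε^{|ℛ|}` makes this at most `κ`.
-/

open scoped ZMod Pointwise

lemma nint_add_intCast (t : ℝ) (m : ℤ) : nint (t + m) = nint t := by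
  simp only [nint, round_add_intCast, Int.cast_add, add_sub_add_right_eq_sub]

lemma nint_le_abs (t : ℝ) : nint t ≤ |t| := by
  simpa [nint] using round_le t 0

lemma le_sSup_setOf_exists {α : Type*} [Finite α] (φ : α → ℝ) {p : α → Prop} {a : α}
    (ha : p a) : φ a ≤ sSup {t | ∃ r, p r ∧ t = φ r} :=
  le_csSup ((Set.finite_range φ).subset (by rintro _ ⟨r, -, rfl⟩; exact ⟨r, rfl⟩)).bddAbove
    ⟨a, ha, rfl⟩

lemma sum_ite_mem_div_card {α : Type*} [Fintype α] [DecidableEq α] {s : Finset α}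
    (hs : s.Nonempty) : ∑ x, (if x ∈ s then (1 : ℝ) else 0) / #s = 1 := by
  rw [← sum_div, sum_boole, filter_mem_eq_inter, univ_inter, div_self (by simpa using hs.ne_empty)]

lemma sum_sq_ite_mem_div_card {α : Type*} [Fintype α] [DecidableEq α] (s : Finset α) :
    ∑ x, ((if x ∈ s then (1 : ℝ) else 0) / #s) ^ 2 = 1 / #s := by
  simp only [div_pow, ite_pow, one_pow, zero_pow two_ne_zero, ← sum_div, sum_boole,
    filter_mem_eq_inter, univ_inter]
  field_simp

section Fourier

variable {N : ℕ} [NeZero N]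

lemma ZMod.sum_Icc_one_natCast {M : Type*} [AddCommGroup M] (h : ZMod N → M) :
    ∑ x ∈ Icc 1 N, h x = ∑ z, h z := by
  have hrange : ∑ k ∈ range N, h k = ∑ z, h z :=
    sum_nbij' Nat.cast ZMod.val (by simp) (by simp [ZMod.val_lt])
      (fun k hk => ZMod.val_cast_of_lt (mem_range.1 hk)) (fun z _ => ZMod.natCast_zmod_val z)
      (fun _ _ => rfl)
  have hshift : ∑ x ∈ Icc 1 N, h x = ∑ k ∈ range N, h ↑(k + 1) := by
    rw [range_eq_Ico, sum_Ico_add' (fun k : ℕ => h k), zero_add, Ico_add_one_right_eq_Icc]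
  have hwrap := sum_range_succ (fun k : ℕ => h k) N
  rw [sum_range_succ', ZMod.natCast_self, ← Nat.cast_zero (R := ZMod N), add_left_inj] at hwrap
  rw [hshift, hwrap, hrange]

lemma dft_eq_zmodDft_ofReal (f : ZMod N → ℝ) : dft N f = 𝓕 (fun x => (f x : ℂ)) := by
  funext r
  rw [dft, ZMod.dft_apply, ← ZMod.sum_Icc_one_natCast]
  refine sum_congr rfl fun x _ => ?_
  have harg : (-((x : ZMod N) * r)) = (((-(x * r.val : ℕ) : ℤ)) : ZMod N) := by
    push_cast; rw [ZMod.natCast_zmod_val]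
  rw [smul_eq_mul, mul_comm, harg, ZMod.stdAddChar_coe, eC]
  congr 2
  push_cast
  ring

def addConv {R : Type*} [Semiring R] (f g : ZMod N → R) (x : ZMod N) : R :=
  ∑ y, f y * g (x - y)

lemma ZMod.dft_addConv (f g : ZMod N → ℂ) : 𝓕 (addConv f g) = 𝓕 f * 𝓕 g := by
  funext k
  simp only [ZMod.dft_apply, addConv, Pi.mul_apply, smul_eq_mul]
  rw [sum_mul_sum]
  simp only [mul_sum]
  rw [sum_comm]
  refine sum_congr rfl fun y _ => Fintype.sum_equiv (Equiv.subRight y) _ _ fun x => ?_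
  rw [Equiv.subRight_apply, show -(x * k) = -(y * k) + -((x - y) * k) by ring,
    AddChar.map_add_eq_mul]
  ring

lemma ZMod.natCast_mul_norm_le_sum_norm_dft (Φ : ZMod N → ℂ) (x : ZMod N) :
    N * ‖Φ x‖ ≤ ∑ k, ‖𝓕 Φ k‖ := by
  have hN : (N : ℝ) ≠ 0 := Nat.cast_ne_zero.2 (NeZero.ne N)
  rw [← congrFun (ZMod.dft.symm_apply_apply Φ) x, ZMod.invDFT_apply, norm_smul, norm_inv,
    Complex.norm_natCast, ← mul_assoc, mul_inv_cancel₀ hN, one_mul]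
  refine (norm_sum_le _ _).trans_eq (sum_congr rfl fun k _ => ?_)
  rw [norm_smul, AddChar.norm_apply, one_mul]

lemma ZMod.sum_norm_dft_sq (Φ : ZMod N → ℂ) :
    ∑ k, ‖𝓕 Φ k‖ ^ 2 = N * ∑ j, ‖Φ j‖ ^ 2 := by
  have horth : ∀ i j : ZMod N,
      ∑ k, ZMod.stdAddChar (k * (i - j)) = if i = j then (N : ℂ) else 0 := by
    intro i j
    rw [AddChar.sum_mulShift _ (ZMod.isPrimitive_stdAddChar N), ZMod.card]
    simp [sub_eq_zero]
  have hterm : ∀ k i j : ZMod N, ZMod.stdAddChar (-(i * k)) * Φ i *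
      (starRingEnd ℂ (ZMod.stdAddChar (-(j * k))) * starRingEnd ℂ (Φ j)) =
      Φ i * starRingEnd ℂ (Φ j) * ZMod.stdAddChar (k * (j - i)) := by
    intro k i j
    rw [← AddChar.map_neg_eq_conj, neg_neg, show k * (j - i) = -(i * k) + j * k by ring,
      AddChar.map_add_eq_mul]
    ring
  apply Complex.ofReal_injective
  push_cast
  simp_rw [← Complex.mul_conj', ZMod.dft_apply, map_sum, smul_eq_mul, map_mul, sum_mul_sum, hterm]
  rw [sum_comm, mul_sum]
  refine sum_congr rfl fun i _ => ?_
  rw [sum_comm]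
  simp_rw [← mul_sum, horth]
  simp [mul_comm]

lemma natCast_mul_norm_addConv_addConv_le (f g : ZMod N → ℂ) {δ : ℝ} (hδ0 : 0 ≤ δ)
    (hδ : ∀ k ≠ 0, ‖𝓕 f k‖ ≤ δ) (x : ZMod N) :
    N * ‖addConv (addConv f g) g x‖ ≤ ‖𝓕 f 0‖ * ‖𝓕 g 0‖ ^ 2 + δ * (N * ∑ j, ‖g j‖ ^ 2) := by
  calc N * ‖addConv (addConv f g) g x‖
      ≤ ∑ k, ‖𝓕 (addConv (addConv f g) g) k‖ := ZMod.natCast_mul_norm_le_sum_norm_dft _ x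
    _ = ∑ k, ‖𝓕 f k‖ * ‖𝓕 g k‖ ^ 2 := by
      simp only [ZMod.dft_addConv, Pi.mul_apply, norm_mul, sq, mul_assoc]
    _ = ‖𝓕 f 0‖ * ‖𝓕 g 0‖ ^ 2 + ∑ k ∈ univ.erase 0, ‖𝓕 f k‖ * ‖𝓕 g k‖ ^ 2 :=
      (add_sum_erase _ _ (mem_univ 0)).symm
    _ ≤ ‖𝓕 f 0‖ * ‖𝓕 g 0‖ ^ 2 + ∑ k ∈ univ.erase 0, δ * ‖𝓕 g k‖ ^ 2 := by
      gcongr with k hk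
      exact hδ k (ne_of_mem_erase hk)
    _ ≤ ‖𝓕 f 0‖ * ‖𝓕 g 0‖ ^ 2 + δ * ∑ k, ‖𝓕 g k‖ ^ 2 := by
      rw [← mul_sum]
      gcongr
      exact erase_subset _ _
    _ = ‖𝓕 f 0‖ * ‖𝓕 g 0‖ ^ 2 + δ * (N * ∑ j, ‖g j‖ ^ 2) := by
      rw [ZMod.sum_norm_dft_sq]

lemma natCast_mul_abs_addConv_addConv_le (f g : ZMod N → ℝ) (hf : ∀ x, 0 ≤ f x) {δ : ℝ}
    (hδ0 : 0 ≤ δ) (hδ : ∀ k ≠ 0, ‖dft N f k‖ ≤ δ) (x : ZMod N) :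
    N * |addConv (addConv f g) g x| ≤ (∑ y, f y) * (∑ y, g y) ^ 2 + δ * (N * ∑ y, g y ^ 2) := by
  have h := natCast_mul_norm_addConv_addConv_le (fun y => (f y : ℂ)) (fun y => (g y : ℂ)) hδ0
    (fun k hk => dft_eq_zmodDft_ofReal f ▸ hδ k hk) x
  have hconv : ((addConv (addConv f g) g x : ℝ) : ℂ) =
      addConv (addConv (fun y => (f y : ℂ)) (fun y => (g y : ℂ))) (fun y => (g y : ℂ)) x := by
    simp [addConv]
  rw [← hconv] at h
  simpa [ZMod.dft_apply_zero, ← Complex.ofReal_sum, abs_of_nonneg (sum_nonneg fun y _ => hf y)]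
    using h

end Fourier

lemma sum_card_filter_forall_sub_mem {ι X G : Type*} [Fintype ι] [DecidableEq ι] [Fintype X]
    [AddCommGroup G] [Fintype G] [DecidableEq G] (φ : X → ι → G) (I : Finset G) :
    ∑ t : ι → G, #(univ.filter fun x => ∀ i, φ x i - t i ∈ I) =
      Fintype.card X * #I ^ Fintype.card ι := by
  have hfiber : ∀ x, #(univ.filter fun t : ι → G => ∀ i, φ x i - t i ∈ I) =
      #I ^ Fintype.card ι := by
    intro x
    rw [← card_univ (α := ι), ← prod_const, ← Fintype.card_piFinset]
    exact card_equiv (Equiv.piCongrRight fun i => Equiv.subLeft (φ x i)) fun t => by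
      simp [Fintype.mem_piFinset]
  simp only [card_filter]
  rw [sum_comm]
  simp only [← card_filter, hfiber, sum_const, card_univ, smul_eq_mul]

section Bohr

variable {N : ℕ} [NeZero N]

noncomputable def bohrSet (N : ℕ) [NeZero N] (ℛ : Finset (ZMod N)) (ε : ℝ) : Finset (ZMod N) :=
  univ.filter fun x => ∀ r ∈ ℛ, nint (((x.val : ℕ) : ℝ) * ((r.val : ℕ) : ℝ) / N) ≤ ε

lemma mul_le_card_filter_val_lt {ε : ℝ} (hε : ε ≤ 1) :
    ε * N ≤ #(univ.filter fun v : ZMod N => (v.val : ℝ) < ε * N) := by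
  have hceil : ⌈ε * N⌉₊ ≤ N := Nat.ceil_le.2 (by nlinarith [(Nat.cast_nonneg N : (0 : ℝ) ≤ N)])
  have hval : ∀ j ∈ range ⌈ε * N⌉₊, (j : ZMod N).val = j :=
    fun j hj => ZMod.val_cast_of_lt ((mem_range.1 hj).trans_le hceil)
  have hmaps : Set.MapsTo (Nat.cast : ℕ → ZMod N) (range ⌈ε * N⌉₊)
      (univ.filter fun v : ZMod N => (v.val : ℝ) < ε * N) := fun j hj =>
    mem_coe.2 (mem_filter.2 ⟨mem_univ _, by rw [hval j hj]; exact Nat.lt_ceil.1 (mem_range.1 hj)⟩)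
  have hinj : Set.InjOn (Nat.cast : ℕ → ZMod N) (range ⌈ε * N⌉₊) := fun i hi j hj hij => by
    simpa [hval i hi, hval j hj] using congrArg ZMod.val hij
  have hcard := card_le_card_of_injOn _ hmaps hinj
  rw [card_range] at hcard
  exact (Nat.le_ceil _).trans (by exact_mod_cast hcard)

lemma nint_val_mul_val_div_le {ε : ℝ} {y r u v : ZMod N} (h : y * r = u - v)
    (hu : (u.val : ℝ) < ε * N) (hv : (v.val : ℝ) < ε * N) :
    nint (((y.val : ℕ) : ℝ) * ((r.val : ℕ) : ℝ) / N) ≤ ε := by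
  have hN : (0 : ℝ) < N := Nat.cast_pos.2 (Nat.pos_of_ne_zero (NeZero.ne N))
  obtain ⟨m, hm⟩ : (N : ℤ) ∣ (y.val * r.val : ℕ) - ((u.val : ℤ) - v.val) := by
    rw [← ZMod.intCast_eq_intCast_iff_dvd_sub]
    push_cast
    simp [h]
  have hshift : ((y.val : ℕ) : ℝ) * ((r.val : ℕ) : ℝ) / N = (u.val - v.val : ℝ) / N + m := by
    field_simp
    exact_mod_cast (by linarith : ((y.val * r.val : ℕ) : ℤ) = u.val - v.val + N * m)
  rw [hshift, nint_add_intCast]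
  refine (nint_le_abs _).trans ?_
  rw [abs_div, abs_of_pos hN, div_le_iff₀ hN, abs_le]
  constructor <;> linarith [(Nat.cast_nonneg _ : (0 : ℝ) ≤ u.val), (Nat.cast_nonneg _ : (0 : ℝ) ≤ v.val)]

lemma pow_mul_le_card_bohrSet {ε : ℝ} (hε0 : 0 ≤ ε) (hε1 : ε ≤ 1) (ℛ : Finset (ZMod N)) :
    ε ^ #ℛ * N ≤ #(bohrSet N ℛ ε) := by
  set I := univ.filter fun v : ZMod N => (v.val : ℝ) < ε * N
  set S : (ℛ → ZMod N) → Finset (ZMod N) := fun t => univ.filter fun x => ∀ i, x * i - t i ∈ I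
  -- Averaging over the `N ^ #ℛ` translates `t`, some box `S t` has at least `N * (#I / N) ^ #ℛ`
  -- elements, and differences of its elements lie in the Bohr set.
  obtain ⟨t, -, ht⟩ : ∃ t ∈ univ, N * #I ^ #ℛ ≤ N ^ #ℛ * #(S t) := by
    refine exists_le_of_sum_le univ_nonempty ?_
    have hsum := sum_card_filter_forall_sub_mem (fun (x : ZMod N) (i : ℛ) => x * i) I
    rw [ZMod.card, Fintype.card_coe] at hsum
    rw [sum_const, card_univ, ← mul_sum, hsum, Fintype.card_fun, ZMod.card, Fintype.card_coe,
      smul_eq_mul, mul_comm]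
  have hdiff : S t - S t ⊆ bohrSet N ℛ ε := by
    refine sub_subset_iff.2 fun x hx y hy => mem_filter.2 ⟨mem_univ _, fun r hr => ?_⟩
    have hxr := mem_filter.1 ((mem_filter.1 hx).2 ⟨r, hr⟩)
    have hyr := mem_filter.1 ((mem_filter.1 hy).2 ⟨r, hr⟩)
    exact nint_val_mul_val_div_le (by ring) hxr.2 hyr.2
  have hN : (0 : ℝ) < N := Nat.cast_pos.2 (Nat.pos_of_ne_zero (NeZero.ne N))
  have hSt : (N : ℝ) ^ #ℛ * (ε ^ #ℛ * N) ≤ N ^ #ℛ * #(bohrSet N ℛ ε) :=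
    calc (N : ℝ) ^ #ℛ * (ε ^ #ℛ * N) = N * (ε * N) ^ #ℛ := by ring
      _ ≤ N * #I ^ #ℛ := by gcongr; exact mul_le_card_filter_val_lt hε1
      _ ≤ N ^ #ℛ * #(S t) := by exact_mod_cast ht
      _ ≤ N ^ #ℛ * #(bohrSet N ℛ ε) := by
        have := card_le_card_sub_self.trans (card_le_card hdiff)
        gcongr
  exact le_of_mul_le_mul_left hSt (by positivity)

end Bohr

theorem smoothed_bound_general (N : ℕ) [NeZero N] (κ : ℝ) (hκ : 0 < κ)
    (𝔞 : ZMod N → ℝ) (h𝔞nonneg : ∀ x, 0 ≤ 𝔞 x) (h𝔞sum : ∑ x : ZMod N, 𝔞 x ≤ 1 + κ)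
    (δ : ℝ) (hδ : δ = sSup {t : ℝ | ∃ r : ZMod N, r ≠ 0 ∧ t = ‖dft N 𝔞 r‖})
    (ε : ℝ) (hε0 : 0 < ε) (hε1 : ε < 1)
    (ℛ : Finset (ZMod N))
    (ℬ : Finset (ZMod N))
    (hℬ : ∀ x : ZMod N, x ∈ ℬ ↔
      ∀ r ∈ ℛ, nint (((x.val : ℕ) : ℝ) * ((r.val : ℕ) : ℝ) / N) ≤ ε)
    (𝔟 : ZMod N → ℝ) (h𝔟 : ∀ x, 𝔟 x = (if x ∈ ℬ then (1 : ℝ) else 0) / (ℬ.card : ℝ))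
    (𝔞' : ZMod N → ℝ)
    (h𝔞' : ∀ x, 𝔞' x = ∑ y : ZMod N, (∑ u : ZMod N, 𝔞 u * 𝔟 (y - u)) * 𝔟 (x - y))
    (hcond : δ / κ ≤ ε ^ ℛ.card) :
    ∀ x : ZMod N, |𝔞' x| ≤ (1 + 2 * κ) / N := by
  intro x
  have hN : (0 : ℝ) < N := Nat.cast_pos.2 (Nat.pos_of_ne_zero (NeZero.ne N))
  have hℬcard : ε ^ #ℛ * N ≤ #ℬ := by
    convert pow_mul_le_card_bohrSet hε0.le hε1.le ℛ using 3
    ext y; simp [bohrSet, hℬ]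
  have hℬpos : (0 : ℝ) < #ℬ := (by positivity : (0 : ℝ) < ε ^ #ℛ * N).trans_le hℬcard
  have hδ0 : 0 ≤ δ := hδ ▸ Real.sSup_nonneg (by rintro _ ⟨r, -, rfl⟩; positivity)
  have hδ𝔞 : ∀ k ≠ 0, ‖dft N 𝔞 k‖ ≤ δ :=
    fun k hk => hδ ▸ le_sSup_setOf_exists (fun r => ‖dft N 𝔞 r‖) hk
  have hmain := natCast_mul_abs_addConv_addConv_le 𝔞 𝔟 h𝔞nonneg hδ0 hδ𝔞 x
  rw [← show 𝔞' x = addConv (addConv 𝔞 𝔟) 𝔟 x from h𝔞' x, funext h𝔟,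
    sum_ite_mem_div_card (card_pos.1 (by exact_mod_cast hℬpos)), sum_sq_ite_mem_div_card]
    at hmain
  have hδℬ : δ * (N * (1 / #ℬ)) ≤ κ := by
    rw [mul_one_div, mul_div_assoc', div_le_iff₀ hℬpos]
    calc δ * N ≤ κ * ε ^ #ℛ * N := by gcongr; rwa [← div_le_iff₀' hκ]
      _ ≤ κ * #ℬ := by rw [mul_assoc]; gcongr
  rw [le_div_iff₀' hN]
  nlinarith

/-- Let `N` be a prime, `κ > 0`, and `𝔞 : ℤ_N → ℝ_{≥0}` with `Σ 𝔞(x) ≤ 1 + κ`.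
Let `δ = sup_{r ≠ 0} |𝔞̃(r)|`, let `η, ε ∈ (0,1)`,
`ℛ = {r : |𝔞̃(r)| ≥ η}`, `ℬ = {x : ‖xr/N‖ ≤ ε for all r ∈ ℛ}`,
`𝔟 = 1_ℬ/|ℬ|` and `𝔞' = 𝔞 * 𝔟 * 𝔟`. If `ε^{|ℛ|} ≥ δ/κ`, then
`|𝔞'(x)| ≤ (1 + 2κ)/N` for every `x ∈ ℤ_N`. -/
theorem smoothed_bound (N : ℕ) [NeZero N] (hN : N.Prime) (κ : ℝ) (hκ : 0 < κ)
    (𝔞 : ZMod N → ℝ) (h𝔞nonneg : ∀ x, 0 ≤ 𝔞 x) (h𝔞sum : ∑ x : ZMod N, 𝔞 x ≤ 1 + κ)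
    (δ : ℝ) (hδ : δ = sSup {t : ℝ | ∃ r : ZMod N, r ≠ 0 ∧ t = ‖dft N 𝔞 r‖})
    (η ε : ℝ) (hη0 : 0 < η) (hη1 : η < 1) (hε0 : 0 < ε) (hε1 : ε < 1)
    (ℛ : Finset (ZMod N)) (hℛ : ∀ r : ZMod N, r ∈ ℛ ↔ η ≤ ‖dft N 𝔞 r‖)
    (ℬ : Finset (ZMod N))
    (hℬ : ∀ x : ZMod N, x ∈ ℬ ↔
      ∀ r ∈ ℛ, nint (((x.val : ℕ) : ℝ) * ((r.val : ℕ) : ℝ) / N) ≤ ε)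
    (𝔟 : ZMod N → ℝ) (h𝔟 : ∀ x, 𝔟 x = (if x ∈ ℬ then (1 : ℝ) else 0) / (ℬ.card : ℝ))
    (𝔞' : ZMod N → ℝ)
    (h𝔞' : ∀ x, 𝔞' x = ∑ y : ZMod N, (∑ u : ZMod N, 𝔞 u * 𝔟 (y - u)) * 𝔟 (x - y))
    (hcond : δ / κ ≤ ε ^ ℛ.card) :
    ∀ x : ZMod N, |𝔞' x| ≤ (1 + 2 * κ) / N :=
  smoothed_bound_general N κ hκ 𝔞 h𝔞nonneg h𝔞sum δ hδ ε hε0 hε1 ℛ ℬ hℬ 𝔟 h𝔟 𝔞' h𝔞' hcond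
end

section
/- Let K, m be positive integers, set κ = 10⁻⁴K⁻¹m⁻¹, and let N be a sufficiently large prime. Let A ⊆ ℤ_N with |A| ≥ N/(4mK), and let 𝔞': ℤ_N → ℝ_{≥0} satisfy 𝔞'(x) ≤ (1+2κ)/N for all x ∈ ℤ_N and Σ_{x∈ℤ_N} 𝔞'(x) ≥ 1 − κ. Then Σ_{x,y,z∈ℤ_N, x+y=z} 1_A(x)1_A(y)𝔞'(z) ≥ κ⁴·N. -/
/-!
Let `T` be the set of `z` with `𝔞'(z) < 1/(2N)`. Since `𝔞' ≤ (1+2κ)/N` everywhere while its total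
mass is at least `1 - κ`, the set `T` is small: `|T| ≤ 6κN`. For each `x ∈ A`, all but at most
`|T|` of the points `x + y` with `y ∈ A` lie outside `T`, so the sum is at least
`|A| (|A| - |T|) / (2N)`. As `|A| ≥ 2500κN` dominates `|T|`, this is of order `κ²N ≥ κ⁴N`.
-/

open Finset

lemma card_filter_lt_mul_le {α : Type*} [Fintype α] (f : α → ℝ) {c u : ℝ}
    (hf : ∀ x, f x ≤ u) :
    #{x | f x < c} * (u - c) ≤ Fintype.card α * u - ∑ x, f x := by
  have hpt : ∀ x, f x ≤ u - if f x < c then u - c else 0 := fun x => by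
    split_ifs <;> linarith [hf x]
  have := sum_le_sum fun x (_ : x ∈ univ) => hpt x
  rw [sum_sub_distrib, sum_ite, sum_const_zero, add_zero, sum_const, sum_const] at this
  simp only [card_univ, nsmul_eq_mul] at this
  linarith

lemma card_filter_lt_half_inv_le {α : Type*} [Fintype α] {f : α → ℝ} {κ : ℝ} (hκ : 0 ≤ κ)
    (hα : 0 < Fintype.card α) (hf : ∀ x, f x ≤ (1 + 2 * κ) / Fintype.card α)
    (hsum : 1 - κ ≤ ∑ x, f x) :
    (#{x | f x < 1 / (2 * Fintype.card α)} : ℝ) ≤ 6 * κ * Fintype.card α := by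
  set n : ℝ := (Fintype.card α : ℝ)
  have hn : 0 < n := Nat.cast_pos.mpr hα
  have h := card_filter_lt_mul_le f (c := 1 / (2 * n)) hf
  have hgap : (1 + 2 * κ) / n - 1 / (2 * n) = (1 + 4 * κ) / (2 * n) := by field_simp; ring
  rw [mul_div_cancel₀ _ hn.ne', hgap, mul_div_assoc', div_le_iff₀ (by positivity)] at h
  nlinarith [Nat.cast_nonneg (α := ℝ) #{x | f x < 1 / (2 * n)}]

lemma mul_card_sub_card_filter_lt_le_sum {α : Type*} {s : Finset α} {f : α → ℝ}
    (hf : ∀ x ∈ s, 0 ≤ f x) (c : ℝ) :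
    c * (#s - #{x ∈ s | f x < c}) ≤ ∑ x ∈ s, f x := by
  have hpt : ∀ x ∈ s, c - (if f x < c then c else 0) ≤ f x := fun x hx => by
    split_ifs <;> linarith [hf x hx]
  have := sum_le_sum hpt
  rw [sum_sub_distrib, sum_ite, sum_const_zero, add_zero, sum_const, sum_const] at this
  simp only [nsmul_eq_mul] at this
  linarith

lemma card_filter_add_lt_le {G : Type*} [AddGroup G] [Fintype G] (f : G → ℝ) (c : ℝ)
    (s : Finset G) (x : G) :
    #{y ∈ s | f (x + y) < c} ≤ #{z | f z < c} :=
  card_le_card_of_injOn (x + ·) (fun y hy => by simp_all) (add_right_injective x).injOn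

lemma mul_card_mul_sub_le_sum_sum_add {G : Type*} [AddGroup G] [Fintype G] {f : G → ℝ}
    (hf : ∀ z, 0 ≤ f z) {c : ℝ} (hc : 0 ≤ c) (A : Finset G) :
    c * #A * (#A - #{z | f z < c}) ≤ ∑ x ∈ A, ∑ y ∈ A, f (x + y) := by
  rw [mul_comm c, mul_assoc, ← nsmul_eq_mul, ← sum_const]
  refine sum_le_sum fun x _ => (mul_card_sub_card_filter_lt_le_sum (fun y _ => hf _) c).trans' ?_
  have : (#{y ∈ A | f (x + y) < c} : ℝ) ≤ #{z | f z < c} := by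
    exact_mod_cast card_filter_add_lt_le f c A x
  exact mul_le_mul_of_nonneg_left (by linarith) hc

lemma sum_sum_boole_mul_boole_mul {α : Type*} [Fintype α] [DecidableEq α] (A : Finset α) (f : α → α → ℝ) :
    ∑ x, ∑ y, (if x ∈ A then (1 : ℝ) else 0) * (if y ∈ A then (1 : ℝ) else 0) * f x y
      = ∑ x ∈ A, ∑ y ∈ A, f x y := by
  simp [ite_mul, sum_ite_mem]

lemma pow_four_mul_le_mul_mul_sub {κ n a t : ℝ} (hκ : 0 < κ) (hκ1 : κ ≤ 1) (hn : 0 < n)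
    (ha : 2500 * κ * n ≤ a) (ht : t ≤ 6 * κ * n) :
    κ ^ 4 * n ≤ 1 / (2 * n) * a * (a - t) := by
  have hκn : 0 < κ * n := mul_pos hκ hn
  have hat : a / 2 ≤ a - t := by nlinarith
  have hκ4 : κ ^ 4 ≤ κ ^ 2 := pow_le_pow_of_le_one hκ.le hκ1 (by norm_num)
  have : κ ^ 4 * n * (2 * n) ≤ a * (a - t) := by
    nlinarith [mul_le_mul ha ha (by positivity) (by linarith),
      mul_le_mul_of_nonneg_right hκ4 (sq_nonneg n)]
  rw [mul_assoc, one_div_mul_eq_div, le_div_iff₀ (by positivity)]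
  linarith

/-- Lemma 2.8 of the paper: let `K, m` be positive integers, `κ = 10⁻⁴K⁻¹m⁻¹`,
and `N` a sufficiently large prime. If `A ⊆ ℤ_N` has `|A| ≥ N/(4mK)` and
`𝔞' : ℤ_N → ℝ_{≥0}` satisfies `𝔞'(x) ≤ (1+2κ)/N` for all `x` and
`Σ_x 𝔞'(x) ≥ 1 − κ`, then `Σ_{x+y=z} 1_A(x)1_A(y)𝔞'(z) ≥ κ⁴N`. -/
theorem major_term_bound (K m : ℕ) (hK : 0 < K) (hm : 0 < m) (κ : ℝ)
    (hκ : κ = (1 / 10000 : ℝ) / ((K : ℝ) * m)) :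
    ∃ N₀ : ℕ, ∀ (N : ℕ) [NeZero N], N₀ ≤ N → N.Prime →
    ∀ A : Finset (ZMod N), (N : ℝ) / (4 * m * K) ≤ (A.card : ℝ) →
    ∀ 𝔞' : ZMod N → ℝ, (∀ x, 0 ≤ 𝔞' x) → (∀ x, 𝔞' x ≤ (1 + 2 * κ) / N) →
      1 - κ ≤ ∑ x : ZMod N, 𝔞' x →
    κ ^ 4 * N ≤ ∑ x : ZMod N, ∑ y : ZMod N,
      (if x ∈ A then (1 : ℝ) else 0) * (if y ∈ A then (1 : ℝ) else 0) * 𝔞' (x + y) := by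
  refine ⟨0, fun N _ _ _ A hA 𝔞' h0 hub hsum => ?_⟩
  have hKm : (1 : ℝ) ≤ K * m := by exact_mod_cast Nat.one_le_iff_ne_zero.mpr (by positivity)
  have hκ0 : 0 < κ := by rw [hκ]; positivity
  have hκ1 : κ ≤ 1 := by rw [hκ, div_le_one (by positivity)]; linarith
  have hN : 0 < Fintype.card (ZMod N) := by rw [ZMod.card]; exact Nat.pos_of_neZero N
  have hA' : 2500 * κ * N ≤ #A := by
    convert hA using 1
    rw [hκ]; field_simp; ring
  have hT := card_filter_lt_half_inv_le hκ0.le hN (by rwa [ZMod.card]) hsum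
  rw [ZMod.card] at hN hT
  rw [sum_sum_boole_mul_boole_mul A (fun x y => 𝔞' (x + y))]
  calc κ ^ 4 * N ≤ 1 / (2 * N) * #A * (#A - #{z | 𝔞' z < 1 / (2 * N)}) :=
        pow_four_mul_le_mul_mul_sub hκ0 hκ1 (by exact_mod_cast hN) hA' hT
    _ ≤ ∑ x ∈ A, ∑ y ∈ A, 𝔞' (x + y) := mul_card_mul_sub_le_sum_sum_add h0 (by positivity) A
end
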